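/- If 1 < γ < 4/3, set M* = 4πĀ(γ−1)/(4−3γ) · r₀^{−(4−3γ)/(γ−1)}. Then: (i) M(R) < M* for every R > r₀; (ii) M(R) → M* as R → ∞; and (iii) for every M ∈ (0, M*) there exists a unique R ∈ (r₀, ∞) with M(R) = M. -/

import Mathlib

/-!
Write `p = 1/(γ-1)`, so `p > 3` exactly when `γ < 4/3`. The mass integral
`∫_{r₀}^R (1/r - 1/R)^p r² dr` is continuous and strictly increasing in `R`: both the integrand
and the domain grow with `R`. Its integrand increases to `r^(2-p)`, which is integrable on
`(r₀, ∞)` because `p > 3`, so by dominated convergence it tends to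
`∫_{r₀}^∞ r^(2-p) dr = r₀^(3-p)/(p-3)`, and `M* = 4πĀ · r₀^(3-p)/(p-3)`. A strictly increasing
function stays below its limit, and the intermediate value theorem gives the unique radius.
-/

open Real Set Filter MeasureTheory intervalIntegral Topology

section StrictMonoLimit

variable {f : ℝ → ℝ} {a L : ℝ}

theorem StrictMonoOn.lt_of_tendsto_atTop (hf : StrictMonoOn f (Ici a))
    (hL : Tendsto f atTop (𝓝 L)) {x : ℝ} (hx : a ≤ x) : f x < L :=
  (hf hx (mem_Ici.2 (by linarith)) (lt_add_one x)).trans_le <|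
    ge_of_tendsto hL <| (eventually_ge_atTop (x + 1)).mono fun _ hy =>
      hf.monotoneOn (mem_Ici.2 (by linarith)) (mem_Ici.2 (by linarith)) hy

theorem StrictMonoOn.existsUnique_eq_of_tendsto_atTop (hf : StrictMonoOn f (Ici a))
    (hc : ContinuousOn f (Ici a)) (hL : Tendsto f atTop (𝓝 L)) {m : ℝ}
    (hm : m ∈ Ioo (f a) L) : ∃! x, a < x ∧ f x = m := by
  obtain ⟨b, hab, hmb⟩ :=
    ((eventually_ge_atTop a).and (hL.eventually (eventually_gt_nhds hm.2))).exists
  obtain ⟨x, hx, hfx⟩ :=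
    intermediate_value_Ioo hab (hc.mono Icc_subset_Ici_self) ⟨hm.1, hmb⟩
  refine ⟨x, ⟨hx.1, hfx⟩, fun y ⟨hy, hfy⟩ => ?_⟩
  exact hf.injOn (mem_Ici.2 hy.le) (mem_Ici.2 hx.1.le) (hfy.trans hfx.symm)

end StrictMonoLimit

theorem one_div_rpow_mul_sq {r : ℝ} (hr : 0 < r) (p : ℝ) : (1 / r) ^ p * r ^ 2 = r ^ (2 - p) := by
  rw [one_div, inv_rpow hr.le, rpow_sub hr, rpow_two, div_eq_inv_mul]

noncomputable def massIntegral (p r₀ R : ℝ) : ℝ :=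
  ∫ r in r₀..R, (1 / r - 1 / R) ^ p * r ^ 2

/-- The integrand of `massIntegral`, extended to a jointly continuous function of `(R, r)` that
vanishes for `r ≥ R`: this makes `massIntegral` a parametric integral over a fixed domain. -/
noncomputable def massKernel (p r₀ R r : ℝ) : ℝ :=
  max (1 / max r r₀ - 1 / max R r₀) 0 ^ p * r ^ 2

section MassKernel

variable {p r₀ : ℝ}

theorem continuous_massKernel (hp : 0 < p) (hr₀ : 0 < r₀) :
    Continuous (Function.uncurry (massKernel p r₀)) := by
  have hmax : ∀ x : ℝ, max x r₀ ≠ 0 := fun x => (lt_max_of_lt_right hr₀).ne'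
  unfold massKernel Function.uncurry
  refine Continuous.mul (Continuous.rpow_const ?_ fun _ => Or.inr hp.le) (by fun_prop)
  exact ((continuous_const.div (by fun_prop) fun q : ℝ × ℝ => hmax q.2).sub
    (continuous_const.div (by fun_prop) fun q : ℝ × ℝ => hmax q.1)).max continuous_const

theorem massKernel_nonneg (R r : ℝ) : 0 ≤ massKernel p r₀ R r :=
  mul_nonneg (rpow_nonneg (le_max_right _ _) _) (sq_nonneg r)

theorem massKernel_of_mem_Icc {R r : ℝ} (hr₀ : 0 < r₀) (hr : r ∈ Icc r₀ R) :
    massKernel p r₀ R r = (1 / r - 1 / R) ^ p * r ^ 2 := by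
  have h : 0 ≤ 1 / r - 1 / R := sub_nonneg.2 (one_div_le_one_div_of_le (hr₀.trans_le hr.1) hr.2)
  rw [massKernel, max_eq_left hr.1, max_eq_left (hr.1.trans hr.2), max_eq_left h]

theorem massKernel_eq_zero_of_le (hp : 0 < p) (hr₀ : 0 < r₀) {R r : ℝ} (h : R ≤ r) :
    massKernel p r₀ R r = 0 := by
  have h' : 1 / max r r₀ - 1 / max R r₀ ≤ 0 :=
    sub_nonpos.2 (one_div_le_one_div_of_le (lt_max_of_lt_right hr₀) (max_le_max h le_rfl))
  rw [massKernel, max_eq_right h', zero_rpow hp.ne', zero_mul]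

theorem massKernel_pos (hr₀ : 0 < r₀) {R r : ℝ} (hr : r ∈ Ioo r₀ R) : 0 < massKernel p r₀ R r := by
  have hr0 : 0 < r := hr₀.trans hr.1
  have h : 0 < 1 / r - 1 / R := sub_pos.2 (one_div_lt_one_div_of_lt hr0 hr.2)
  rw [massKernel_of_mem_Icc hr₀ (Ioo_subset_Icc_self hr)]
  positivity

theorem massKernel_mono (hp : 0 < p) (hr₀ : 0 < r₀) {R₁ R₂ : ℝ} (h : R₁ ≤ R₂) (r : ℝ) :
    massKernel p r₀ R₁ r ≤ massKernel p r₀ R₂ r := by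
  refine mul_le_mul_of_nonneg_right (rpow_le_rpow (le_max_right _ _) ?_ hp.le) (sq_nonneg r)
  exact max_le_max (sub_le_sub_left (one_div_le_one_div_of_le (lt_max_of_lt_right hr₀)
    (max_le_max h le_rfl)) _) le_rfl

theorem massKernel_le_rpow (hp : 0 < p) (hr₀ : 0 < r₀) (R : ℝ) {r : ℝ} (hr : r₀ ≤ r) :
    massKernel p r₀ R r ≤ r ^ (2 - p) := by
  have hr0 : 0 < r := hr₀.trans_le hr
  have h : max (1 / max r r₀ - 1 / max R r₀) 0 ≤ 1 / r := by
    have : 0 < 1 / max R r₀ := one_div_pos.2 (lt_max_of_lt_right hr₀)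
    rw [max_eq_left hr]
    exact max_le (by linarith) (by positivity)
  rw [← one_div_rpow_mul_sq hr0]
  exact mul_le_mul_of_nonneg_right (rpow_le_rpow (le_max_right _ _) h hp.le) (sq_nonneg r)

theorem tendsto_massKernel_atTop (hr₀ : 0 < r₀) {r : ℝ} (hr : r₀ < r) :
    Tendsto (fun R => massKernel p r₀ R r) atTop (𝓝 (r ^ (2 - p))) := by
  have hr0 : 0 < r := hr₀.trans hr
  have hcont : ContinuousAt (fun u : ℝ => (1 / r - u) ^ p * r ^ 2) 0 := by
    refine ContinuousAt.mul (ContinuousAt.rpow_const (by fun_prop) (Or.inl ?_)) (by fun_prop)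
    simpa using hr0.ne'
  have h := hcont.tendsto.comp tendsto_inv_atTop_zero
  rw [sub_zero, one_div_rpow_mul_sq hr0] at h
  refine h.congr' ?_
  filter_upwards [eventually_ge_atTop r] with R hR
  simp only [Function.comp_apply, massKernel_of_mem_Icc hr₀ ⟨hr.le, hR⟩, one_div]

end MassKernel

section MassIntegral

variable {p r₀ : ℝ}

theorem massIntegral_eq_intervalIntegral_massKernel (hr₀ : 0 < r₀) {R : ℝ} (hR : r₀ ≤ R) :
    massIntegral p r₀ R = ∫ r in r₀..R, massKernel p r₀ R r :=
  integral_congr fun _ hr => (massKernel_of_mem_Icc hr₀ (uIcc_of_le hR ▸ hr)).symm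

theorem massIntegral_eq_integral_Ioi (hp : 0 < p) (hr₀ : 0 < r₀) {R : ℝ} (hR : r₀ ≤ R) :
    massIntegral p r₀ R = ∫ r in Ioi r₀, massKernel p r₀ R r := by
  rw [massIntegral_eq_intervalIntegral_massKernel hr₀ hR, integral_of_le hR,
    setIntegral_eq_of_subset_of_forall_sdiff_eq_zero measurableSet_Ioi Ioc_subset_Ioi_self]
  rintro r ⟨hr, hrR⟩
  exact massKernel_eq_zero_of_le hp hr₀ (le_of_lt (not_le.1 fun h => hrR ⟨hr, h⟩))

theorem continuousOn_massIntegral (hp : 0 < p) (hr₀ : 0 < r₀) :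
    ContinuousOn (massIntegral p r₀) (Ici r₀) :=
  (continuous_parametric_intervalIntegral_of_continuous (continuous_massKernel hp hr₀)
    continuous_id).continuousOn.congr fun _ hR => massIntegral_eq_intervalIntegral_massKernel hr₀ hR

theorem strictMonoOn_massIntegral (hp : 0 < p) (hr₀ : 0 < r₀) :
    StrictMonoOn (massIntegral p r₀) (Ici r₀) := by
  intro R₁ hR₁ R₂ hR₂ h
  have hint : ∀ a b R, IntervalIntegrable (massKernel p r₀ R) volume a b := fun a b R =>
    ((continuous_massKernel hp hr₀).uncurry_left R).intervalIntegrable a b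
  have hle : massIntegral p r₀ R₁ ≤ ∫ r in r₀..R₁, massKernel p r₀ R₂ r := by
    rw [massIntegral_eq_intervalIntegral_massKernel hr₀ hR₁]
    exact integral_mono_on hR₁ (hint _ _ _) (hint _ _ _) fun r _ => massKernel_mono hp hr₀ h.le r
  have hpos : 0 < ∫ r in R₁..R₂, massKernel p r₀ R₂ r :=
    intervalIntegral_pos_of_pos_on (hint _ _ _)
      (fun r hr => massKernel_pos hr₀ ⟨lt_of_le_of_lt hR₁ hr.1, hr.2⟩) h
  rw [massIntegral_eq_intervalIntegral_massKernel hr₀ (hR₁.trans h.le),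
    ← integral_add_adjacent_intervals (hint r₀ R₁ R₂) (hint R₁ R₂ R₂)]
  linarith

theorem tendsto_massIntegral_atTop (hp : 3 < p) (hr₀ : 0 < r₀) :
    Tendsto (massIntegral p r₀) atTop (𝓝 (r₀ ^ (3 - p) / (p - 3))) := by
  have hp0 : 0 < p := by linarith
  have hlim : ∫ r in Ioi r₀, r ^ (2 - p) = r₀ ^ (3 - p) / (p - 3) := by
    rw [integral_Ioi_rpow_of_lt (by linarith) hr₀, show 2 - p + 1 = 3 - p by ring, neg_div,
      ← div_neg, neg_sub]
  rw [← hlim]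
  refine (tendsto_integral_filter_of_dominated_convergence (F := massKernel p r₀) _ ?_ ?_
    (integrableOn_Ioi_rpow_of_lt (a := 2 - p) (by linarith) hr₀) ?_).congr' ?_
  · exact .of_forall fun R => ((continuous_massKernel hp0 hr₀).uncurry_left R).aestronglyMeasurable
  · refine .of_forall fun R => (ae_restrict_iff' measurableSet_Ioi).2 (.of_forall fun r hr => ?_)
    rw [norm_of_nonneg (massKernel_nonneg R r)]
    exact massKernel_le_rpow hp0 hr₀ R (le_of_lt hr)
  · exact (ae_restrict_iff' measurableSet_Ioi).2
      (.of_forall fun r hr => tendsto_massKernel_atTop hr₀ hr)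
  · filter_upwards [eventually_ge_atTop r₀] with R hR
    exact (massIntegral_eq_integral_Ioi hp0 hr₀ hR).symm

end MassIntegral

/-- For 1 < γ < 4/3, with M* = 4πĀ(γ−1)/(4−3γ) · r₀^{−(4−3γ)/(γ−1)}: M(R) < M* for all R > r₀,
M(R) → M* as R → ∞, and every mass in (0, M*) is attained by a unique radius R > r₀. -/
theorem stmt_4 (γ A g₀ r₀ : ℝ) (hγ : 1 < γ) (hγ' : γ < 4 / 3) (hA : 0 < A) (hg₀ : 0 < g₀)
    (hr₀ : 0 < r₀) :
    let Abar : ℝ := ((γ - 1) * g₀ / (γ * A)) ^ (1 / (γ - 1))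
    let M : ℝ → ℝ := fun R => 4 * π * Abar * ∫ r in r₀..R, (1 / r - 1 / R) ^ (1 / (γ - 1)) * r ^ 2
    let Mstar : ℝ := 4 * π * Abar * (γ - 1) / (4 - 3 * γ) * r₀ ^ (-(4 - 3 * γ) / (γ - 1))
    (∀ R : ℝ, r₀ < R → M R < Mstar) ∧
    Tendsto M atTop (nhds Mstar) ∧
    (∀ m : ℝ, m ∈ Ioo 0 Mstar → ∃! R : ℝ, r₀ < R ∧ M R = m) := by
  intro Abar M Mstar
  set p := 1 / (γ - 1)
  have hγ1 : 0 < γ - 1 := by linarith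
  have hp : 3 < p := by rw [lt_div_iff₀ hγ1]; linarith
  have hc : 0 < 4 * π * Abar := by positivity
  have hMstar : Mstar = 4 * π * Abar * (r₀ ^ (3 - p) / (p - 3)) := by
    have h₁ : -(4 - 3 * γ) / (γ - 1) = 3 - p := by simp only [p]; field_simp; ring
    have h₂ : p - 3 = (4 - 3 * γ) / (γ - 1) := by simp only [p]; field_simp; ring
    simp only [Mstar, h₁, h₂]
    field_simp
  have hmono : StrictMonoOn M (Ici r₀) :=
    (strictMono_mul_left_of_pos hc).comp_strictMonoOn (strictMonoOn_massIntegral (by linarith) hr₀)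
  have hlim : Tendsto M atTop (nhds Mstar) :=
    hMstar ▸ (tendsto_massIntegral_atTop hp hr₀).const_mul _
  refine ⟨fun R hR => hmono.lt_of_tendsto_atTop hlim hR.le, hlim, fun m hm => ?_⟩
  refine hmono.existsUnique_eq_of_tendsto_atTop
    (continuousOn_const.mul (continuousOn_massIntegral (by linarith) hr₀)) hlim ⟨?_, hm.2⟩
  simpa [M] using hm.1
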